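/- The number of triples (A, B, C) of odd-cardinality subsets of [n] with |Δ(A,B,C)| = 1 equals n · 4^{n−1}, where Δ(A,B,C) = (A∖(B∪C)) ∪ (B∖(A∪C)) ∪ (C∖(A∪B)) ∪ (A∩B∩C). -/

import Mathlib

/-!
Since `Δ(A,B,C) = A ∆ B ∆ C`, the map `(A,B,C) ↦ (A,B,A ∆ B ∆ C)` is an involution, and when
`A` and `B` are odd it preserves the parity of the third component. It therefore matches the
triples counted with the triples `(A,B,S)`, `A`, `B` odd and `S` a singleton. Finally, toggling
a fixed element shows that exactly half of the `2^n` subsets of `[n]` are odd.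
-/

open Finset

/-- `Δ(X,Y,Z) = (X∖(Y∪Z)) ∪ (Y∖(X∪Z)) ∪ (Z∖(X∪Y)) ∪ (X∩Y∩Z)`. -/
def tripleDelta {n : ℕ} (X Y Z : Finset (Fin n)) : Finset (Fin n) :=
  (X \ (Y ∪ Z)) ∪ (Y \ (X ∪ Z)) ∪ (Z \ (X ∪ Y)) ∪ (X ∩ Y ∩ Z)

open scoped symmDiff

lemma tripleDelta_eq_symmDiff {n : ℕ} (X Y Z : Finset (Fin n)) :
    tripleDelta X Y Z = X ∆ Y ∆ Z := by
  ext a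
  simp only [tripleDelta, mem_union, mem_sdiff, mem_inter, mem_symmDiff]
  tauto

section Parity

variable {α : Type*} [DecidableEq α]

lemma card_symmDiff_add_two_mul_card_inter (s t : Finset α) :
    #(s ∆ t) + 2 * #(s ∩ t) = #s + #t := by
  have hst := card_sdiff_add_card_inter s t
  have hts := card_sdiff_add_card_inter t s
  rw [symmDiff_def, sup_eq_union, card_union_of_disjoint disjoint_sdiff_sdiff, inter_comm t s]
    at *
  omega

lemma even_card_symmDiff_iff (s t : Finset α) : Even #(s ∆ t) ↔ Even (#s + #t) := by
  rw [← card_symmDiff_add_two_mul_card_inter, Nat.even_add, iff_true_right (even_two_mul _)]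

lemma odd_card_symmDiff_symmDiff_iff {s t : Finset α} (hs : Odd #s) (ht : Odd #t)
    (u : Finset α) : Odd #(s ∆ t ∆ u) ↔ Odd #u := by
  simp only [← Nat.not_even_iff_odd] at *
  rw [even_card_symmDiff_iff, Nat.even_add, even_card_symmDiff_iff, Nat.even_add]
  tauto

end Parity

section Counting

variable (α : Type*) [Fintype α]

lemma card_filter_card_eq_one : #{s : Finset α | #s = 1} = Fintype.card α := by
  rw [← powerset_univ, ← powersetCard_eq_filter, card_powersetCard, Nat.choose_one_right,
    card_univ]

variable [DecidableEq α]

lemma card_filter_odd_card_mul_two [Nonempty α] :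
    #{s : Finset α | Odd #s} * 2 = 2 ^ Fintype.card α := by
  obtain ⟨a⟩ := ‹Nonempty α›
  have hflip_even (s : Finset α) : Even #(s ∆ {a}) ↔ Odd #s := by
    rw [even_card_symmDiff_iff, card_singleton, Nat.even_add_one, Nat.not_even_iff_odd]
  have hflip_odd (s : Finset α) : Odd #(s ∆ {a}) ↔ Even #s := by
    rw [← Nat.not_even_iff_odd, hflip_even, Nat.not_odd_iff_even]
  have hodd_even : #{s : Finset α | Odd #s} = #{s : Finset α | ¬Odd #s} := by
    refine card_nbij' (· ∆ {a}) (· ∆ {a}) ?_ ?_ ?_ ?_ <;>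
      simp [Set.MapsTo, Set.LeftInvOn, hflip_even, hflip_odd, symmDiff_symmDiff_cancel_right]
  rw [mul_two]
  nth_rw 2 [hodd_even]
  rw [card_filter_add_card_filter_not, card_univ, Fintype.card_finset]

lemma card_filter_odd_odd_odd_card_symmDiff_eq_one :
    #{t : Finset α × Finset α × Finset α |
        Odd #t.1 ∧ Odd #t.2.1 ∧ Odd #t.2.2 ∧ #(t.1 ∆ t.2.1 ∆ t.2.2) = 1} =
      #{s : Finset α | Odd #s} * #{s : Finset α | Odd #s} * Fintype.card α := by
  rw [← card_filter_card_eq_one, mul_assoc, ← card_product, ← card_product]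
  let f (t : Finset α × Finset α × Finset α) := (t.1, t.2.1, t.1 ∆ t.2.1 ∆ t.2.2)
  have hff (t) : f (f t) = t := by simp [f, symmDiff_symmDiff_cancel_left]
  refine card_nbij' f f ?_ ?_ (fun t _ ↦ hff t) (fun t _ ↦ hff t)
  · rintro ⟨A, B, C⟩
    simp +contextual [f]
  · rintro ⟨A, B, S⟩
    simp +contextual [f, odd_card_symmDiff_symmDiff_iff, symmDiff_symmDiff_cancel_left]

end Counting

theorem stmt12_general (n : ℕ) :
    (Finset.univ.filter fun t : Finset (Fin n) × Finset (Fin n) × Finset (Fin n) =>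
        Odd t.1.card ∧ Odd t.2.1.card ∧ Odd t.2.2.card ∧
          (tripleDelta t.1 t.2.1 t.2.2).card = 1).card = n * 4 ^ (n - 1) := by
  simp only [tripleDelta_eq_symmDiff]
  rw [card_filter_odd_odd_odd_card_symmDiff_eq_one, Fintype.card_fin]
  rcases n with _ | m
  · simp
  · have h := card_filter_odd_card_mul_two (Fin (m + 1))
    rw [Fintype.card_fin, pow_succ, Nat.mul_left_inj two_ne_zero] at h
    rw [h, Nat.add_sub_cancel, show 4 = 2 * 2 by rfl, mul_pow]
    ring

/-- The number of triples `(A,B,C)` of odd-cardinality subsets of `[n]` with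
`|Δ(A,B,C)| = 1` equals `n · 4^{n−1}`. -/
theorem stmt12 (n : ℕ) (hn : 1 ≤ n) :
    (Finset.univ.filter fun t : Finset (Fin n) × Finset (Fin n) × Finset (Fin n) =>
        Odd t.1.card ∧ Odd t.2.1.card ∧ Odd t.2.2.card ∧
          (tripleDelta t.1 t.2.1 t.2.2).card = 1).card = n * 4 ^ (n - 1) :=
  stmt12_general n
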